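/- For real matrices B, C, D, F of compatible dimensions, the nuclear norm of the block matrix [[B, C], [D, F]] equals ‖B‖_* if and only if C = 0, D = 0, and F = 0. -/

import Mathlib

/-!
Write `‖M‖_* = tr √(MᵀM)`. Splitting `M = [[B, C], [D, F]]` into the block rows `R₁ = [B C]` and
`R₂ = [D F]` gives `MᵀM = R₁ᵀR₁ + R₂ᵀR₂ ≥ R₁ᵀR₁`, and since the matrix square root is operator
monotone, `‖M‖_* ≥ ‖R₁‖_*`, with equality only if `√(MᵀM) - √(R₁ᵀR₁)`, a positive semidefinite
matrix of trace zero, vanishes, i.e. only if `R₂ = 0`. As `XᵀX` and `XXᵀ` have the same nonzero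
eigenvalues, `‖R₁‖_* = ‖R₁ᵀ‖_*`, and the same argument applied to `R₁ R₁ᵀ = BBᵀ + CCᵀ` gives
`‖R₁‖_* ≥ ‖B‖_*`, with equality only if `C = 0`.
-/

open Matrix

/-- The nuclear norm of a real matrix: the sum of its singular values,
i.e. the sum of the square roots of the eigenvalues of `Mᵀ * M`. -/
noncomputable def nuclearNorm {m n : Type*} [Fintype m] [Fintype n] [DecidableEq n]
    (M : Matrix m n ℝ) : ℝ :=
  ∑ i, Real.sqrt ((show (Mᵀ * M).IsHermitian by
    rw [IsHermitian, conjTranspose_eq_transpose_of_trivial, transpose_mul, transpose_transpose]).eigenvalues i)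

open Polynomial
open scoped MatrixOrder

lemma Polynomial.sum_map_roots_X_pow_mul {R S : Type*} [CommRing R] [IsDomain R]
    [AddCommMonoid S] {p : R[X]} (hp : p ≠ 0) (k : ℕ) {g : R → S} (hg : g 0 = 0) :
    (((X : R[X]) ^ k * p).roots.map g).sum = (p.roots.map g).sum := by
  rw [roots_mul (mul_ne_zero (pow_ne_zero _ X_ne_zero) hp), roots_X_pow]
  simp [Multiset.map_nsmul, Multiset.sum_nsmul, hg]

namespace Matrix

section Spectrum

variable {𝕜 m n : Type*} [RCLike 𝕜] [Fintype m] [DecidableEq m] [Fintype n] [DecidableEq n]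

lemma IsHermitian.sum_eigenvalues_eq_sum_roots {A : Matrix n n 𝕜} (hA : A.IsHermitian)
    (f : ℝ → ℝ) : ∑ i, f (hA.eigenvalues i) = (A.charpoly.roots.map (f ∘ RCLike.re)).sum := by
  rw [hA.roots_charpoly_eq_eigenvalues, Multiset.map_map]
  simp [Function.comp_def, Finset.sum_map_val]

lemma IsHermitian.sum_eigenvalues_mul_comm {f : ℝ → ℝ} (hf : f 0 = 0) {X : Matrix m n 𝕜}
    {Y : Matrix n m 𝕜} (hXY : (X * Y).IsHermitian) (hYX : (Y * X).IsHermitian) :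
    ∑ i, f (hXY.eigenvalues i) = ∑ j, f (hYX.eigenvalues j) := by
  have hg : (f ∘ RCLike.re) (0 : 𝕜) = 0 := by simp [hf]
  rw [hXY.sum_eigenvalues_eq_sum_roots, hYX.sum_eigenvalues_eq_sum_roots,
    ← sum_map_roots_X_pow_mul (X * Y).charpoly_monic.ne_zero (Fintype.card n) hg,
    ← sum_map_roots_X_pow_mul (Y * X).charpoly_monic.ne_zero (Fintype.card m) hg,
    charpoly_mul_comm']

lemma IsHermitian.trace_cfc {A : Matrix n n 𝕜} (hA : A.IsHermitian) (f : ℝ → ℝ) :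
    (cfc f A).trace = ∑ i, (f (hA.eigenvalues i) : 𝕜) := by
  rw [hA.cfc_eq, IsHermitian.cfc, Unitary.conjStarAlgAut_apply, trace_mul_cycle,
    Unitary.coe_star_mul_self, one_mul, trace_diagonal]
  rfl

end Spectrum

lemma transpose_mul_self_nonneg {m n : Type*} [Fintype m] [Fintype n] (M : Matrix m n ℝ) :
    0 ≤ Mᵀ * M :=
  (posSemidef_conjTranspose_mul_self M).nonneg

lemma transpose_fromRows_mul_fromRows {R m m' n : Type*} [Semiring R]
    [Fintype m] [Fintype m'] (X : Matrix m n R) (Y : Matrix m' n R) :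
    (fromRows X Y)ᵀ * fromRows X Y = Xᵀ * X + Yᵀ * Y := by
  rw [transpose_fromRows, fromCols_mul_fromRows]

lemma le_transpose_fromRows_mul_fromRows {m m' n : Type*} [Fintype m] [Fintype m'] [Fintype n]
    (X : Matrix m n ℝ) (Y : Matrix m' n ℝ) : Xᵀ * X ≤ (fromRows X Y)ᵀ * fromRows X Y := by
  rw [transpose_fromRows_mul_fromRows]
  exact le_add_of_nonneg_right (transpose_mul_self_nonneg Y)

section Sqrt

variable {n : Type*} [Fintype n] [DecidableEq n]

lemma PosSemidef.trace_sqrt {A : Matrix n n ℝ} (hA : A.PosSemidef) :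
    (CFC.sqrt A).trace = ∑ i, √(hA.1.eigenvalues i) := by
  rw [CFC.sqrt_eq_cfc, cfc_nnreal_eq_real _ A, hA.1.trace_cfc]
  simp only [RCLike.ofReal_real_eq_id, id, Real.sqrt]

/-- `CFC.sqrt_le_sqrt` needs a complex C⋆-algebra, so it does not cover real matrices. -/
lemma sqrt_le_sqrt {A B : Matrix n n ℝ} (hA : 0 ≤ A) (hAB : A ≤ B) :
    CFC.sqrt A ≤ CFC.sqrt B := by
  set X := CFC.sqrt B
  set Y := CFC.sqrt A
  have hX : X.PosSemidef := (CFC.sqrt_nonneg B).posSemidef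
  have hY : Y.PosSemidef := (CFC.sqrt_nonneg A).posSemidef
  have hT : (X - Y).IsHermitian := hX.1.sub hY.1
  rw [le_iff, hT.posSemidef_iff_eigenvalues_nonneg]
  intro i
  by_contra! hμ
  replace hμ : hT.eigenvalues i < 0 := hμ
  set μ := hT.eigenvalues i
  set v : n → ℝ := ⇑(hT.eigenvectorBasis i)
  have hv : v ≠ 0 := fun h =>
    hT.eigenvectorBasis.orthonormal.ne_zero i (by ext j; exact congrFun h j)
  have hTv : (X - Y) *ᵥ v = μ • v := hT.mulVec_eigenvectorBasis i
  have hvT : v ᵥ* (X - Y) = μ • v := by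
    rw [← mulVec_transpose, ← conjTranspose_eq_transpose_of_trivial, hT.eq, hTv]
  -- `B - A = X (X - Y) + (X - Y) Y` turns the quadratic form of `B - A` at `v` into
  -- `μ (vᵀXv + vᵀYv)`, which is `≥ 0` only if `Xv = Yv = 0`.
  have hdiff : B - A = X * (X - Y) + (X - Y) * Y := by
    rw [mul_sub, sub_mul, CFC.sqrt_mul_sqrt_self B (hA.trans hAB), CFC.sqrt_mul_sqrt_self A]
    abel
  have hquad : v ⬝ᵥ ((B - A) *ᵥ v) = μ * (v ⬝ᵥ (X *ᵥ v) + v ⬝ᵥ (Y *ᵥ v)) := by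
    rw [hdiff, add_mulVec, dotProduct_add, ← mulVec_mulVec, ← mulVec_mulVec, hTv,
      dotProduct_mulVec v (X - Y), hvT, mulVec_smul, dotProduct_smul, smul_dotProduct,
      smul_eq_mul, smul_eq_mul, mul_add]
  have hBA : 0 ≤ v ⬝ᵥ ((B - A) *ᵥ v) := by
    simpa using (le_iff.mp hAB).dotProduct_mulVec_nonneg v
  have hXv : 0 ≤ v ⬝ᵥ (X *ᵥ v) := by simpa using hX.dotProduct_mulVec_nonneg v
  have hYv : 0 ≤ v ⬝ᵥ (Y *ᵥ v) := by simpa using hY.dotProduct_mulVec_nonneg v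
  have hXv0 : X *ᵥ v = 0 := (hX.dotProduct_mulVec_zero_iff v).mp (by simp; nlinarith)
  have hYv0 : Y *ᵥ v = 0 := (hY.dotProduct_mulVec_zero_iff v).mp (by simp; nlinarith)
  have hμv : μ • v = 0 := by rw [← hTv, sub_mulVec, hXv0, hYv0, sub_zero]
  exact hv ((smul_eq_zero.mp hμv).resolve_left hμ.ne)

lemma trace_sqrt_le_trace_sqrt {A B : Matrix n n ℝ} (hA : 0 ≤ A) (hAB : A ≤ B) :
    (CFC.sqrt A).trace ≤ (CFC.sqrt B).trace := by
  have := (le_iff.mp (sqrt_le_sqrt hA hAB)).trace_nonneg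
  rw [trace_sub] at this
  linarith

lemma trace_sqrt_eq_trace_sqrt_iff {A B : Matrix n n ℝ} (hA : 0 ≤ A) (hAB : A ≤ B) :
    (CFC.sqrt B).trace = (CFC.sqrt A).trace ↔ B = A := by
  refine ⟨fun h => ?_, fun h => h ▸ rfl⟩
  have hsqrt : CFC.sqrt B = CFC.sqrt A := by
    rw [← sub_eq_zero, ← (le_iff.mp (sqrt_le_sqrt hA hAB)).trace_eq_zero_iff, trace_sub, h,
      sub_self]
  rw [← CFC.sqrt_mul_sqrt_self B (hA.trans hAB), hsqrt, CFC.sqrt_mul_sqrt_self A]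

end Sqrt

end Matrix

section NuclearNorm

variable {m m' n n' : Type*} [Fintype m] [Fintype m'] [Fintype n] [Fintype n'] [DecidableEq n]

lemma nuclearNorm_eq_trace_sqrt (M : Matrix m n ℝ) :
    nuclearNorm M = (CFC.sqrt (Mᵀ * M)).trace := by
  rw [(transpose_mul_self_nonneg M).posSemidef.trace_sqrt]
  rfl

lemma nuclearNorm_transpose [DecidableEq m] (M : Matrix m n ℝ) :
    nuclearNorm Mᵀ = nuclearNorm M :=
  IsHermitian.sum_eigenvalues_mul_comm Real.sqrt_zero _ _

lemma nuclearNorm_le_nuclearNorm_fromRows (X : Matrix m n ℝ) (Y : Matrix m' n ℝ) :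
    nuclearNorm X ≤ nuclearNorm (fromRows X Y) := by
  rw [nuclearNorm_eq_trace_sqrt, nuclearNorm_eq_trace_sqrt]
  exact trace_sqrt_le_trace_sqrt (transpose_mul_self_nonneg X)
    (le_transpose_fromRows_mul_fromRows X Y)

lemma nuclearNorm_fromRows_eq_iff (X : Matrix m n ℝ) (Y : Matrix m' n ℝ) :
    nuclearNorm (fromRows X Y) = nuclearNorm X ↔ Y = 0 := by
  rw [nuclearNorm_eq_trace_sqrt, nuclearNorm_eq_trace_sqrt,
    trace_sqrt_eq_trace_sqrt_iff (transpose_mul_self_nonneg X)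
      (le_transpose_fromRows_mul_fromRows X Y),
    transpose_fromRows_mul_fromRows, add_eq_left, ← conjTranspose_eq_transpose_of_trivial,
    conjTranspose_mul_self_eq_zero]

variable [DecidableEq m] [DecidableEq n']

lemma nuclearNorm_fromCols_eq_nuclearNorm_fromRows (X : Matrix m n ℝ) (Y : Matrix m n' ℝ) :
    nuclearNorm (fromCols X Y) = nuclearNorm (fromRows Xᵀ Yᵀ) := by
  rw [← nuclearNorm_transpose, transpose_fromCols]

lemma nuclearNorm_le_nuclearNorm_fromCols (X : Matrix m n ℝ) (Y : Matrix m n' ℝ) :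
    nuclearNorm X ≤ nuclearNorm (fromCols X Y) := by
  rw [nuclearNorm_fromCols_eq_nuclearNorm_fromRows, ← nuclearNorm_transpose X]
  exact nuclearNorm_le_nuclearNorm_fromRows Xᵀ Yᵀ

lemma nuclearNorm_fromCols_eq_iff (X : Matrix m n ℝ) (Y : Matrix m n' ℝ) :
    nuclearNorm (fromCols X Y) = nuclearNorm X ↔ Y = 0 := by
  rw [nuclearNorm_fromCols_eq_nuclearNorm_fromRows, ← nuclearNorm_transpose X,
    nuclearNorm_fromRows_eq_iff, transpose_eq_zero]

end NuclearNorm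

theorem stmt_2 {m m' n n' : Type*} [Fintype m] [Fintype m'] [Fintype n] [Fintype n']
    [DecidableEq n] [DecidableEq n']
    (B : Matrix m n ℝ) (C : Matrix m n' ℝ) (D : Matrix m' n ℝ) (F : Matrix m' n' ℝ) :
    nuclearNorm (Matrix.fromBlocks B C D F) = nuclearNorm B ↔ C = 0 ∧ D = 0 ∧ F = 0 := by
  classical
  rw [← fromRows_fromCols_eq_fromBlocks]
  have hrows := nuclearNorm_le_nuclearNorm_fromRows (fromCols B C) (fromCols D F)
  have hcols := nuclearNorm_le_nuclearNorm_fromCols B C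
  constructor
  · intro h
    have hC : C = 0 := (nuclearNorm_fromCols_eq_iff B C).mp (by linarith)
    have hDF : fromCols D F = 0 := (nuclearNorm_fromRows_eq_iff _ _).mp (by linarith)
    rw [← fromCols_zero, fromCols_inj.eq_iff] at hDF
    exact ⟨hC, hDF⟩
  · rintro ⟨rfl, rfl, rfl⟩
    rw [fromCols_zero, (nuclearNorm_fromRows_eq_iff _ _).mpr rfl,
      (nuclearNorm_fromCols_eq_iff _ _).mpr rfl]
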